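/- On ℓ², let (αₙ) be a sequence of positive reals converging to some α > 0, and define A₀(x) = (αₙ xₙ)ₙ and A₁(x) = (αₙ(1 + 1/n) xₙ)ₙ. Then A₀, A₁ are positive definite invertible bounded operators, and the joint image {(⟨A₀x,x⟩, ⟨A₁x,x⟩) : x ∈ ℓ²} is not closed in ℝ²: the point (1,1) is in its closure but not in the set. -/

import Mathlib

open scoped RealInnerProductSpace
open Filter Topology

/-! Both forms are diagonal in the basis `b`, so `⟪A₀ x, x⟫ = ∑ αₙ xₙ²` and
`⟪A₁ x, x⟫ = ∑ αₙ (1 + 1/(n+1)) xₙ²`. Since `A₁ - A₀` is again diagonal with positive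
entries, the two forms agree only at `x = 0`, so `(1, 1)` is not attained. On the other
hand the normalised basis vector `αₖ^{-1/2} bₖ` is sent to `(1, 1 + 1/(k+1))`, which tends
to `(1, 1)`. Invertibility follows from coercivity: `αₙ` is bounded below by a positive
constant because it converges to a positive limit. -/

lemma exists_pos_forall_le_of_tendsto {u : ℕ → ℝ} {a : ℝ} (hu : ∀ n, 0 < u n) (ha : 0 < a)
    (hlim : Tendsto u atTop (𝓝 a)) : ∃ δ, 0 < δ ∧ ∀ n, δ ≤ u n := by
  obtain ⟨δ, hδK, hδ⟩ :=
    hlim.isCompact_insert_range.exists_isLeast (Set.insert_nonempty a (Set.range u))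
  refine ⟨δ, ?_, fun n => hδ (Set.mem_insert_of_mem a ⟨n, rfl⟩)⟩
  rcases hδK with rfl | ⟨n, rfl⟩
  exacts [ha, hu n]

lemma ContinuousLinearMap.bijective_of_coercive {H : Type*} [NormedAddCommGroup H]
    [InnerProductSpace ℝ H] [CompleteSpace H] (A : H →L[ℝ] H) {δ : ℝ} (hδ : 0 < δ)
    (h : ∀ x, δ * ‖x‖ ^ 2 ≤ ⟪A x, x⟫) : Function.Bijective A := by
  rw [← ContinuousLinearMap.isUnit_iff_bijective]
  refine A.isUnit_of_forall_le_norm_inner_map (c := ⟨δ, hδ.le⟩) hδ fun x => ?_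
  calc ‖x‖ ^ 2 * δ = δ * ‖x‖ ^ 2 := mul_comm _ _
    _ ≤ ⟪A x, x⟫ := h x
    _ ≤ ‖⟪A x, x⟫‖ := Real.le_norm_self _

def jointImage {H : Type*} [NormedAddCommGroup H] [InnerProductSpace ℝ H]
    (A₀ A₁ : H →L[ℝ] H) : Set (ℝ × ℝ) :=
  {p | ∃ x : H, p = (⟪A₀ x, x⟫, ⟪A₁ x, x⟫)}

namespace HilbertBasis

variable {ι H : Type*} [NormedAddCommGroup H] [InnerProductSpace ℝ H]

lemma exists_inner_ne_zero (b : HilbertBasis ι ℝ H) {x : H} (hx : x ≠ 0) :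
    ∃ i, ⟪b i, x⟫ ≠ 0 := by
  by_contra! h
  refine hx (b.repr.injective ?_)
  ext i
  simp [b.repr_apply_apply, h i]

def IsDiagonal (b : HilbertBasis ι ℝ H) (A : H →L[ℝ] H) (c : ι → ℝ) : Prop :=
  ∀ i, A (b i) = c i • b i

namespace IsDiagonal

variable {b : HilbertBasis ι ℝ H} {A B : H →L[ℝ] H} {c d : ι → ℝ}

lemma sub (hA : b.IsDiagonal A c) (hB : b.IsDiagonal B d) : b.IsDiagonal (A - B) (c - d) :=
  fun i => by simp [hA i, hB i, sub_smul]

lemma hasSum_inner (hA : b.IsDiagonal A c) (x y : H) :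
    HasSum (fun i => c i * (⟪b i, x⟫ * ⟪b i, y⟫)) ⟪A x, y⟫ := by
  convert! ((b.hasSum_repr x).mapL A).mapL (innerSL ℝ y) using 1
  · ext i
    simp only [innerSL_apply_apply, map_smul, hA i, b.repr_apply_apply,
      real_inner_comm y (b i)]
    ring
  · exact (real_inner_comm (A x) y).symm

lemma isSymmetric (hA : b.IsDiagonal A c) : (A : H →ₗ[ℝ] H).IsSymmetric := fun x y => by
  change ⟪A x, y⟫ = ⟪x, A y⟫
  rw [← real_inner_comm x (A y)]
  refine (hA.hasSum_inner x y).unique ?_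
  simpa only [mul_comm ⟪b _, x⟫] using hA.hasSum_inner y x

lemma inner_self_pos (hA : b.IsDiagonal A c) (hc : ∀ i, 0 < c i) {x : H} (hx : x ≠ 0) :
    0 < ⟪A x, x⟫ := by
  obtain ⟨i, hi⟩ := b.exists_inner_ne_zero hx
  have hs := hA.hasSum_inner x x
  rw [← hs.tsum_eq]
  exact hs.summable.tsum_pos (fun j => mul_nonneg (hc j).le (mul_self_nonneg _)) i
    (mul_pos (hc i) (mul_self_pos.2 hi))

lemma le_inner_self (hA : b.IsDiagonal A c) {δ : ℝ} (hδ : ∀ i, δ ≤ c i) (x : H) :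
    δ * ‖x‖ ^ 2 ≤ ⟪A x, x⟫ := by
  have hParseval := (b.hasSum_inner_mul_inner x x).mul_left δ
  rw [real_inner_self_eq_norm_sq] at hParseval
  refine hasSum_le (fun i => ?_) hParseval (hA.hasSum_inner x x)
  rw [real_inner_comm x]
  exact mul_le_mul_of_nonneg_right (hδ i) (mul_self_nonneg _)

lemma inner_smul_self (hA : b.IsDiagonal A c) (t : ℝ) (i : ι) :
    ⟪A (t • b i), t • b i⟫ = t ^ 2 * c i := by
  simp only [map_smul, hA i, real_inner_smul_left, real_inner_smul_right,
    real_inner_self_eq_norm_sq, b.orthonormal.1 i]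
  ring

lemma mk_one_div_mem_jointImage (hA : b.IsDiagonal A c) (hB : b.IsDiagonal B d) {i : ι}
    (hi : 0 < c i) : (1, d i / c i) ∈ jointImage A B := by
  refine ⟨(√(c i))⁻¹ • b i, ?_⟩
  rw [hA.inner_smul_self, hB.inner_smul_self, inv_pow, Real.sq_sqrt hi.le,
    inv_mul_cancel₀ hi.ne', inv_mul_eq_div]

lemma eq_zero_of_mk_self_mem_jointImage (hA : b.IsDiagonal A c) (hB : b.IsDiagonal B d)
    (hcd : ∀ i, c i < d i) {t : ℝ} (ht : (t, t) ∈ jointImage A B) : t = 0 := by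
  obtain ⟨x, hx⟩ := ht
  simp only [Prod.mk.injEq] at hx
  obtain rfl | hx0 := eq_or_ne x 0
  · simpa using hx.1
  · have := (hB.sub hA).inner_self_pos (fun i => sub_pos.2 (hcd i)) hx0
    rw [sub_apply, inner_sub_left, ← hx.1, ← hx.2, sub_self] at this
    exact (lt_irrefl 0 this).elim

end IsDiagonal

end HilbertBasis

lemma tendsto_one_add_one_div_nat_add_one :
    Tendsto (fun k : ℕ => (1 : ℝ) + 1 / (k + 1 : ℝ)) atTop (𝓝 1) := by
  simpa using tendsto_one_div_add_atTop_nhds_zero_nat.const_add (1 : ℝ)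

/-- Example: on a real Hilbert space with Hilbert basis `b : ℕ → H` (modeling `ℓ²`),
given positive reals `α n → a > 0` and diagonal operators `A₀ (b n) = α n • b n`,
`A₁ (b n) = α n (1 + 1/(n+1)) • b n`, the operators `A₀, A₁` are positive definite,
bounded below (hence invertible) bounded operators, yet the joint image is not
closed: `(1,1)` is in its closure but not in the set. -/
theorem joint_image_not_closed_invertible_case
    {H : Type*} [NormedAddCommGroup H] [InnerProductSpace ℝ H] [CompleteSpace H]
    (b : HilbertBasis ℕ ℝ H)
    (α : ℕ → ℝ) (hαpos : ∀ n, 0 < α n)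
    (a : ℝ) (ha : 0 < a)
    (hαlim : Filter.Tendsto α Filter.atTop (nhds a))
    (A₀ A₁ : H →L[ℝ] H)
    (hA₀ : ∀ n, A₀ (b n) = α n • b n)
    (hA₁ : ∀ n, A₁ (b n) = (α n * (1 + 1 / (n + 1 : ℝ))) • b n) :
    (∀ x y : H, ⟪A₀ x, y⟫ = ⟪x, A₀ y⟫) ∧
    (∀ x y : H, ⟪A₁ x, y⟫ = ⟪x, A₁ y⟫) ∧
    (∀ x : H, x ≠ 0 → 0 < ⟪A₀ x, x⟫) ∧
    (∀ x : H, x ≠ 0 → 0 < ⟪A₁ x, x⟫) ∧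
    (∃ δ : ℝ, 0 < δ ∧ ∀ x : H, δ * ‖x‖ ^ 2 ≤ ⟪A₀ x, x⟫) ∧
    (∃ δ : ℝ, 0 < δ ∧ ∀ x : H, δ * ‖x‖ ^ 2 ≤ ⟪A₁ x, x⟫) ∧
    Function.Bijective A₀ ∧ Function.Bijective A₁ ∧
    ((1, 1) ∈ closure {p : ℝ × ℝ | ∃ x : H, p = (⟪A₀ x, x⟫, ⟪A₁ x, x⟫)}) ∧
    ((1, 1) ∉ {p : ℝ × ℝ | ∃ x : H, p = (⟪A₀ x, x⟫, ⟪A₁ x, x⟫)}) ∧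
    ¬ IsClosed {p : ℝ × ℝ | ∃ x : H, p = (⟪A₀ x, x⟫, ⟪A₁ x, x⟫)} := by
  change b.IsDiagonal A₀ α at hA₀
  change b.IsDiagonal A₁ _ at hA₁
  have hα_lt : ∀ n, α n < α n * (1 + 1 / (n + 1 : ℝ)) := fun n =>
    lt_mul_of_one_lt_right (hαpos n) (lt_add_of_pos_right 1 (by positivity))
  obtain ⟨δ, hδ, hδα⟩ := exists_pos_forall_le_of_tendsto hαpos ha hαlim
  have lb₀ := hA₀.le_inner_self hδα
  have lb₁ := hA₁.le_inner_self fun n => (hδα n).trans (hα_lt n).le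
  have hclosure : ((1 : ℝ), (1 : ℝ)) ∈ closure (jointImage A₀ A₁) := by
    refine mem_closure_of_tendsto (tendsto_const_nhds.prodMk_nhds
      tendsto_one_add_one_div_nat_add_one) (Eventually.of_forall fun k => ?_)
    have hk := hA₀.mk_one_div_mem_jointImage hA₁ (hαpos k)
    rwa [mul_div_cancel_left₀ _ (hαpos k).ne'] at hk
  have hnotMem : ((1 : ℝ), (1 : ℝ)) ∉ jointImage A₀ A₁ := fun h =>
    one_ne_zero (hA₀.eq_zero_of_mk_self_mem_jointImage hA₁ hα_lt h)
  exact ⟨hA₀.isSymmetric, hA₁.isSymmetric, fun _ => hA₀.inner_self_pos hαpos,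
    fun _ => hA₁.inner_self_pos fun n => (hαpos n).trans (hα_lt n), ⟨δ, hδ, lb₀⟩, ⟨δ, hδ, lb₁⟩,
    A₀.bijective_of_coercive hδ lb₀, A₁.bijective_of_coercive hδ lb₁, hclosure, hnotMem,
    fun hcl => hnotMem (hcl.closure_subset hclosure)⟩
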